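/- arXiv:2402.05464 — 4 statements merged into one kernel-verified Lean document; each statement's English description precedes it below -/
import Mathlib

section
/- There exists a dimensional constant c > 0 such that for every Borel set E ⊆ ℝᵈ, every λ ∈ (0,1), and every x ∈ ℝᵈ, one has χ_{{Mχ_E > λ}}(x) ≤ (c/(λ(1 - log λ))) · M(χ_{{Mχ_E > λ}} · Mχ_E)(x). -/
/-!
If `Mχ_E(x) > λ`, some cube `Q ∋ x` has `|E ∩ Q| = β|Q|` with `β > λ`, and then
`f := χ_{Mχ_E > λ} Mχ_E ≥ β` on `Q`, which settles the case `β ≥ 1/2`. Otherwise let `F = E ∩ Q`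
and `2^K β ≤ 1 < 2^(K+1) β`. At each level `t = 2^k β < 1`, `k < K`, a Vitali family of nearly
largest cubes of `F`-density `> t` through the Lebesgue points of `F` gives the reverse weak-type
bound `|F| ≤ 4^d t |S_k|` for some `S_k ⊆ {Mχ_F > t} ∩ 3Q`. As `∑_k 2^k β χ_{S_k} ≤ 2 f`,
integrating over `3Q` gives `Mf(x) ≥ Kβ / (2·12^d) ≳ β (1 - log β)`, and
`λ (1 - log λ) ≤ β (1 - log β)` because `s ↦ s (1 - log s)` increases on `(0, 1]`.
-/

open MeasureTheory ENNReal Set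

/-- The closed cube in `ℝ^d` with center `c` and half side length `r`. -/
def cube (d : ℕ) (c : Fin d → ℝ) (r : ℝ) : Set (Fin d → ℝ) :=
  {y | ∀ i, |y i - c i| ≤ r}

/-- The uncentered Hardy–Littlewood maximal operator over cubes. -/
noncomputable def maximal (d : ℕ) (f : (Fin d → ℝ) → ℝ≥0∞) (x : Fin d → ℝ) : ℝ≥0∞ :=
  ⨆ (c : Fin d → ℝ) (r : ℝ) (_ : 0 < r) (_ : x ∈ cube d c r),
    (∫⁻ y in cube d c r, f y) / volume (cube d c r)

/-- `u(A) = ∫_A u` for a weight `u` on `ℝ^d`. -/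
noncomputable def uMeas (d : ℕ) (u : (Fin d → ℝ) → ℝ≥0∞) (A : Set (Fin d → ℝ)) : ℝ≥0∞ :=
  ∫⁻ x in A, u x

/-- `W(t) = ∫_0^t w(s) ds` (extended to arguments in `ℝ≥0∞`). -/
noncomputable def Wfun (w : ℝ → ℝ≥0∞) (t : ℝ≥0∞) : ℝ≥0∞ :=
  ∫⁻ s in {s : ℝ | 0 < s ∧ ENNReal.ofReal s < t}, w s

/-- `‖f‖_{Λ^p_u(w)}^p = ∫_0^∞ p t^{p-1} W(u({|f| > t})) dt`. -/
noncomputable def lorentzP (d : ℕ) (p : ℝ) (u : (Fin d → ℝ) → ℝ≥0∞) (w : ℝ → ℝ≥0∞)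
    (f : (Fin d → ℝ) → ℝ≥0∞) : ℝ≥0∞ :=
  ∫⁻ t in Set.Ioi (0:ℝ), ENNReal.ofReal (p * t ^ (p-1)) *
    Wfun w (uMeas d u {x | ENNReal.ofReal t < f x})

open Metric Filter Topology

lemma exists_mem_forall_le_two_mul {A : Set ℝ} (hne : A.Nonempty) (hbdd : BddAbove A)
    (hpos : ∀ q ∈ A, 0 < q) : ∃ q ∈ A, ∀ q' ∈ A, q' ≤ 2 * q := by
  have hsup : 0 < sSup A := let ⟨q, hq⟩ := hne; (hpos q hq).trans_le (le_csSup hbdd hq)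
  obtain ⟨q, hqA, hq⟩ := exists_lt_of_lt_csSup hne (half_lt_self hsup)
  exact ⟨q, hqA, fun q' hq' => by linarith [le_csSup hbdd hq']⟩

lemma mul_one_sub_log_le_mul_one_sub_log {a b : ℝ} (ha : 0 < a) (hab : a ≤ b) (hb : b ≤ 1) :
    a * (1 - Real.log a) ≤ b * (1 - Real.log b) := by
  have hb0 : 0 < b := ha.trans_le hab
  have hlog : a * (Real.log b - Real.log a) ≤ b - a := by
    have h := Real.log_le_sub_one_of_pos (div_pos hb0 ha)
    rw [Real.log_div hb0.ne' ha.ne'] at h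
    calc a * (Real.log b - Real.log a) ≤ a * (b / a - 1) := by gcongr
      _ = b - a := by field_simp
  nlinarith [Real.log_nonpos hb0.le hb]

lemma exists_two_pow_mul_le_one_and_one_sub_log_le {b : ℝ} (hb0 : 0 < b) (hb : b ≤ 1 / 2) :
    ∃ K : ℕ, 2 ^ K * b ≤ 1 ∧ 1 - Real.log b ≤ 3 * K := by
  have hinv : 2 ≤ 1 / b := by rw [le_div_iff₀ hb0]; linarith
  obtain ⟨K, hKle, hKlt⟩ := exists_nat_pow_near (by linarith : (1 : ℝ) ≤ 1 / b) one_lt_two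
  have hK1 : 1 ≤ K := by
    by_contra! h
    interval_cases K
    linarith
  refine ⟨K, by rwa [le_div_iff₀ hb0] at hKle, ?_⟩
  have hlog : Real.log (1 / b) < (K + 1) * Real.log 2 := by
    rw [← Nat.cast_succ, ← Real.log_pow]
    exact Real.log_lt_log (by positivity) hKlt
  have hK : (1 : ℝ) ≤ K := by exact_mod_cast hK1
  rw [one_div, Real.log_inv] at hlog
  nlinarith [Real.log_two_lt_d9, Real.log_pos one_lt_two]

lemma one_le_ofReal_div_mul {a C : ℝ} (ha : 0 < a) {M : ℝ≥0∞}
    (h : ENNReal.ofReal a ≤ ENNReal.ofReal C * M) : 1 ≤ ENNReal.ofReal (C / a) * M := by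
  rw [ENNReal.ofReal_div_of_pos ha, div_eq_mul_inv, mul_right_comm, ← div_eq_mul_inv,
    ENNReal.le_div_iff_mul_le (.inl (by simpa using ha)) (.inl ENNReal.ofReal_ne_top), one_mul]
  exact h

lemma sum_two_pow_mul_le (a : ℝ≥0∞) (K : ℕ) : ∑ k ∈ Finset.range K, 2 ^ k * a ≤ 2 ^ K * a := by
  induction K with
  | zero => simp
  | succ K ih =>
    rw [Finset.sum_range_succ, pow_succ, mul_comm _ (2 : ℝ≥0∞), mul_assoc, two_mul]
    gcongr

lemma sum_indicator_two_pow_mul_le {X : Type*} (g : X → ℝ≥0∞) (a : ℝ≥0∞) (S : ℕ → Set X)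
    {K : ℕ} (hS : ∀ k < K, ∀ y ∈ S k, 2 ^ k * a < g y) (y : X) :
    ∑ k ∈ Finset.range K, (S k).indicator (fun _ => 2 ^ k * a) y ≤ 2 * g y := by
  induction K with
  | zero => simp
  | succ K ih =>
    rw [Finset.sum_range_succ]
    by_cases hy : y ∈ S K
    · calc ∑ k ∈ Finset.range K, (S k).indicator (fun _ => 2 ^ k * a) y + (S K).indicator _ y
          ≤ 2 ^ K * a + 2 ^ K * a := by
            gcongr
            · exact (Finset.sum_le_sum fun k _ => indicator_le_self _ _ _).trans
                (sum_two_pow_mul_le a K)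
            · exact indicator_le_self _ _ _
        _ ≤ 2 * g y := by rw [← two_mul]; gcongr; exact (hS K K.lt_succ_self y hy).le
    · rw [indicator_of_notMem hy, add_zero]
      exact ih fun k hk => hS k (hk.trans K.lt_succ_self)

section

variable {d : ℕ}

lemma cube_eq_closedBall (c : Fin d → ℝ) {r : ℝ} (hr : 0 ≤ r) : cube d c r = closedBall c r := by
  ext y
  simp only [cube, mem_ofPred_eq, mem_closedBall, dist_pi_le_iff hr, Real.dist_eq]

lemma volume_closedBall_fin (c : Fin d → ℝ) {r : ℝ} (hr : 0 ≤ r) :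
    volume (closedBall c r) = ENNReal.ofReal ((2 * r) ^ d) := by
  simp [Real.volume_pi_closedBall c hr]

lemma volume_closedBall_mul (z : Fin d → ℝ) {s r : ℝ} (hs : 0 ≤ s) (hr : 0 ≤ r) :
    volume (closedBall z (s * r)) = ENNReal.ofReal s ^ d * volume (closedBall z r) := by
  rw [volume_closedBall_fin z (mul_nonneg hs hr), volume_closedBall_fin z hr,
    ← ENNReal.ofReal_pow hs, ← ENNReal.ofReal_mul (by positivity), ← mul_pow]
  ring_nf

lemma volume_closedBall_mono {c z : Fin d → ℝ} {ρ q : ℝ} (hρ : 0 ≤ ρ) (hρq : ρ ≤ q) :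
    volume (closedBall c ρ) ≤ volume (closedBall z q) := by
  rw [volume_closedBall_fin c hρ, volume_closedBall_fin z (hρ.trans hρq)]
  gcongr

lemma setLIntegral_div_le_maximal (f : (Fin d → ℝ) → ℝ≥0∞) {x z : Fin d → ℝ} {ρ : ℝ}
    (hρ : 0 < ρ) (hx : x ∈ closedBall z ρ) :
    (∫⁻ y in closedBall z ρ, f y) / volume (closedBall z ρ) ≤ maximal d f x := by
  rw [← cube_eq_closedBall z hρ.le] at hx ⊢
  exact le_iSup_of_le z <| le_iSup_of_le ρ <| le_iSup_of_le hρ <| le_iSup_of_le hx le_rfl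

lemma maximal_mono {f g : (Fin d → ℝ) → ℝ≥0∞} (h : f ≤ g) : maximal d f ≤ maximal d g :=
  fun _ => iSup₂_mono fun _ _ => iSup₂_mono fun _ _ =>
    ENNReal.div_le_div_right (lintegral_mono fun y => h y) _

-- `closedBall z ρ` is the cube of centre `z` and half side `ρ`: `Fin d → ℝ` has the sup metric.
noncomputable def cubeDensity (F : Set (Fin d → ℝ)) (z : Fin d → ℝ) (ρ : ℝ) : ℝ≥0∞ :=
  volume (F ∩ closedBall z ρ) / volume (closedBall z ρ)

section cubeDensity

variable {F : Set (Fin d → ℝ)} {z : Fin d → ℝ} {ρ : ℝ} {t : ℝ≥0∞}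

lemma cubeDensity_le_iff (hρ : 0 < ρ) :
    cubeDensity F z ρ ≤ t ↔ volume (F ∩ closedBall z ρ) ≤ t * volume (closedBall z ρ) :=
  ENNReal.div_le_iff (measure_closedBall_pos volume z hρ).ne' measure_closedBall_lt_top.ne

lemma lt_cubeDensity_iff (hρ : 0 < ρ) :
    t < cubeDensity F z ρ ↔ t * volume (closedBall z ρ) < volume (F ∩ closedBall z ρ) :=
  ENNReal.lt_div_iff_mul_lt (.inl (measure_closedBall_pos volume z hρ).ne')
    (.inl measure_closedBall_lt_top.ne)

lemma cubeDensity_mul_volume (hρ : 0 < ρ) :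
    cubeDensity F z ρ * volume (closedBall z ρ) = volume (F ∩ closedBall z ρ) :=
  ENNReal.div_mul_cancel (measure_closedBall_pos volume z hρ).ne' measure_closedBall_lt_top.ne

lemma setLIntegral_indicator_one_div (hF : MeasurableSet F) :
    (∫⁻ y in closedBall z ρ, F.indicator 1 y) / volume (closedBall z ρ) = cubeDensity F z ρ := by
  rw [lintegral_indicator_one hF, Measure.restrict_apply hF, cubeDensity]

lemma cubeDensity_le_maximal_indicator (hF : MeasurableSet F) {x : Fin d → ℝ} (hρ : 0 < ρ)
    (hx : x ∈ closedBall z ρ) : cubeDensity F z ρ ≤ maximal d (F.indicator 1) x :=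
  setLIntegral_indicator_one_div (z := z) (ρ := ρ) hF ▸ setLIntegral_div_le_maximal _ hρ hx

end cubeDensity

lemma lt_maximal_indicator_iff {F : Set (Fin d → ℝ)} (hF : MeasurableSet F) {t : ℝ≥0∞}
    {x : Fin d → ℝ} : t < maximal d (F.indicator 1) x ↔
      ∃ z ρ, 0 < ρ ∧ x ∈ closedBall z ρ ∧ t < cubeDensity F z ρ := by
  simp only [maximal, lt_iSup_iff, exists_prop]
  refine exists_congr fun z => exists_congr fun ρ => and_congr_right fun hρ => ?_
  rw [cube_eq_closedBall z hρ.le, setLIntegral_indicator_one_div hF]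

-- `χ_{Mχ_E > t} · Mχ_E`
noncomputable def maximalAbove (E : Set (Fin d → ℝ)) (t : ℝ≥0∞) : (Fin d → ℝ) → ℝ≥0∞ :=
  {y | t < maximal d (E.indicator 1) y}.indicator (maximal d (E.indicator 1))

lemma cubeDensity_le_maximal_maximalAbove {E : Set (Fin d → ℝ)} (hE : MeasurableSet E)
    {t : ℝ≥0∞} {x z : Fin d → ℝ} {ρ : ℝ} (hρ : 0 < ρ) (hx : x ∈ closedBall z ρ)
    (ht : t < cubeDensity E z ρ) : cubeDensity E z ρ ≤ maximal d (maximalAbove E t) x := by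
  have hle : ∀ y ∈ closedBall z ρ, cubeDensity E z ρ ≤ maximalAbove E t y := fun y hy => by
    have hy' := cubeDensity_le_maximal_indicator hE hρ hy
    rwa [maximalAbove, indicator_of_mem (show y ∈ {y | t < maximal d (E.indicator 1) y} from
      ht.trans_le hy')]
  refine le_trans ?_ (setLIntegral_div_le_maximal _ hρ hx)
  rw [ENNReal.le_div_iff_mul_le (.inl (measure_closedBall_pos volume z hρ).ne')
    (.inl measure_closedBall_lt_top.ne), ← setLIntegral_const]
  exact setLIntegral_mono' measurableSet_closedBall hle

section ReverseWeakType

variable {F : Set (Fin d → ℝ)} {c : Fin d → ℝ} {ρ : ℝ} {t : ℝ≥0∞}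

lemma radius_lt_of_lt_cubeDensity (hFc : F ⊆ closedBall c ρ) (hρ : 0 < ρ)
    (hFt : cubeDensity F c ρ ≤ t) {z : Fin d → ℝ} {q : ℝ} (hq : 0 < q)
    (h : t < cubeDensity F z q) : q < ρ := by
  by_contra! hρq
  rw [lt_cubeDensity_iff hq] at h
  rw [cubeDensity_le_iff hρ, inter_eq_left.2 hFc] at hFt
  exact (h.trans_le ((measure_mono inter_subset_left).trans hFt)).not_ge
    (mul_le_mul_right (volume_closedBall_mono hρ.le hρq) t)

lemma exists_nearly_largest_cube (hFc : F ⊆ closedBall c ρ) (hρ : 0 < ρ)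
    (hFt : cubeDensity F c ρ ≤ t) (ht1 : t < 1) {y : Fin d → ℝ}
    (hy : Tendsto (cubeDensity F y) (𝓝[>] 0) (𝓝 1)) :
    ∃ z q, 0 < q ∧ q ≤ ρ ∧ y ∈ closedBall z q ∧ t < cubeDensity F z q ∧
      cubeDensity F z (4 * q) ≤ t := by
  set A := {q : ℝ | 0 < q ∧ ∃ z, y ∈ closedBall z q ∧ t < cubeDensity F z q}
  have hne : A.Nonempty := by
    obtain ⟨q, hq, hqt⟩ :=
      (eventually_mem_nhdsWithin.and (hy.eventually (eventually_gt_nhds ht1))).exists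
    exact ⟨q, hq, y, mem_closedBall_self (le_of_lt hq), hqt⟩
  have hbdd : ∀ q ∈ A, q < ρ := fun q ⟨hq, _, _, hqt⟩ =>
    radius_lt_of_lt_cubeDensity hFc hρ hFt hq hqt
  obtain ⟨q, ⟨hq, z, hyz, hqt⟩, hmax⟩ :=
    exists_mem_forall_le_two_mul hne ⟨ρ, fun q hq => (hbdd q hq).le⟩ fun q hq => hq.1
  refine ⟨z, q, hq, (hbdd q ⟨hq, z, hyz, hqt⟩).le, hyz, hqt, ?_⟩
  by_contra! h4
  have hy4 : y ∈ closedBall z (4 * q) := closedBall_subset_closedBall (by linarith) hyz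
  linarith [hmax (4 * q) ⟨by positivity, z, hy4, h4⟩]

lemma exists_countable_volume_le_biUnion {G : Set (Fin d → ℝ)} (hFG : volume (F \ G) = 0)
    (z : (Fin d → ℝ) → Fin d → ℝ) (q : (Fin d → ℝ) → ℝ) {R : ℝ}
    (hq : ∀ y ∈ G, 0 < q y ∧ q y ≤ R) (hyz : ∀ y ∈ G, y ∈ closedBall (z y) (q y))
    (hlight : ∀ y ∈ G, cubeDensity F (z y) (4 * q y) ≤ t) :
    ∃ u ⊆ G, Set.Countable u ∧
      volume F ≤ t * 4 ^ d * volume (⋃ b ∈ u, closedBall (z b) (q b)) := by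
  obtain ⟨u, huG, hdisj, hcover⟩ :=
    Vitali.exists_disjoint_subfamily_covering_enlargement_closedBall G z q R
      (fun y hy => (hq y hy).2) 4 (by norm_num)
  have hu : u.Countable := hdisj.countable_of_nonempty_interior fun b hb =>
    (nonempty_ball.2 (hq b (huG hb)).1).mono ball_subset_interior_closedBall
  have hFu : F ≤ᵐ[volume] ⋃ b ∈ u, F ∩ closedBall (z b) (4 * q b) := by
    refine ae_le_set.2 (measure_mono_null ?_ hFG)
    rintro y ⟨hyF, hyu⟩
    refine ⟨hyF, fun hyG => hyu ?_⟩
    obtain ⟨b, hb, hsub⟩ := hcover y hyG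
    exact mem_iUnion₂.2 ⟨b, hb, hyF, hsub (hyz y hyG)⟩
  have hb4 : ∀ b : u, volume (F ∩ closedBall (z b) (4 * q b)) ≤
      t * 4 ^ d * volume (closedBall (z b) (q b)) := fun ⟨b, hb⟩ => by
    have hqb := (hq b (huG hb)).1
    have h := (cubeDensity_le_iff (by positivity)).1 (hlight b (huG hb))
    rwa [volume_closedBall_mul _ (by norm_num) hqb.le, ENNReal.ofReal_ofNat, ← mul_assoc] at h
  refine ⟨u, huG, hu, ?_⟩
  calc volume F ≤ volume (⋃ b ∈ u, F ∩ closedBall (z b) (4 * q b)) := measure_mono_ae hFu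
    _ ≤ ∑' b : u, volume (F ∩ closedBall (z b) (4 * q b)) := measure_biUnion_le _ hu _
    _ ≤ ∑' b : u, t * 4 ^ d * volume (closedBall (z b) (q b)) := ENNReal.tsum_le_tsum hb4
    _ = t * 4 ^ d * volume (⋃ b ∈ u, closedBall (z b) (q b)) := by
      rw [ENNReal.tsum_mul_left, measure_biUnion hu hdisj fun _ _ => measurableSet_closedBall]

theorem reverse_weak_type_maximal_indicator (hF : MeasurableSet F) (hFc : F ⊆ closedBall c ρ)
    (hρ : 0 < ρ) (hFt : cubeDensity F c ρ ≤ t) (ht1 : t < 1) :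
    ∃ S, MeasurableSet S ∧ S ⊆ closedBall c (3 * ρ) ∧
      (∀ y ∈ S, t < maximal d (F.indicator 1) y) ∧ volume F ≤ t * 4 ^ d * volume S := by
  set G := {y ∈ F | Tendsto (cubeDensity F y) (𝓝[>] 0) (𝓝 1)}
  have hFG : volume (F \ G) = 0 := by
    have h := Besicovitch.ae_tendsto_measure_inter_div volume F
    rw [ae_iff, Measure.restrict_apply' hF] at h
    refine measure_mono_null ?_ h
    rintro y ⟨hyF, hyG⟩
    exact ⟨fun hy => hyG ⟨hyF, hy⟩, hyF⟩
  choose! z q hq hqρ hyz hheavy hlight using fun y (hy : y ∈ G) =>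
    exists_nearly_largest_cube hFc hρ hFt ht1 hy.2
  obtain ⟨u, huG, hu, hvol⟩ := exists_countable_volume_le_biUnion hFG z q
    (fun y hy => ⟨hq y hy, hqρ y hy⟩) hyz hlight
  refine ⟨⋃ b ∈ u, closedBall (z b) (q b),
    .biUnion hu fun _ _ => measurableSet_closedBall, ?_, ?_, hvol⟩
  · simp only [iUnion_subset_iff]
    intro b hb w hw
    have hbG := huG hb
    have h1 := hyz b hbG
    have h2 := hFc hbG.1
    rw [mem_closedBall] at hw h1 h2 ⊢
    linarith [dist_triangle4 w (z b) b c, dist_comm b (z b), hqρ b hbG]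
  · simp only [mem_iUnion]
    rintro y ⟨b, hb, hyb⟩
    exact (hheavy b (huG hb)).trans_le
      (cubeDensity_le_maximal_indicator hF (hq b (huG hb)) hyb)

end ReverseWeakType

lemma natCast_mul_volume_le_setLIntegral {F : Set (Fin d → ℝ)} (hF : MeasurableSet F)
    {c : Fin d → ℝ} {ρ : ℝ} (hFc : F ⊆ closedBall c ρ) (hρ : 0 < ρ) {K : ℕ}
    (hK : 2 ^ K * cubeDensity F c ρ ≤ 1) {g : (Fin d → ℝ) → ℝ≥0∞}
    (hg : ∀ y, cubeDensity F c ρ < maximal d (F.indicator 1) y →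
      maximal d (F.indicator 1) y ≤ g y) :
    K * volume F ≤ 2 * 4 ^ d * ∫⁻ y in closedBall c (3 * ρ), g y := by
  set β := cubeDensity F c ρ
  have hlevel : ∀ k < K, ∃ S, MeasurableSet S ∧ S ⊆ closedBall c (3 * ρ) ∧
      (∀ y ∈ S, 2 ^ k * β < maximal d (F.indicator 1) y) ∧
      volume F ≤ 2 ^ k * β * 4 ^ d * volume S := fun k hk => by
    have hk1 : 2 ^ k * β < 1 := by
      have h2 : 2 * (2 ^ k * β) ≤ 1 := calc
        2 * (2 ^ k * β) = 2 ^ (k + 1) * β := by ring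
        _ ≤ 2 ^ K * β := by gcongr; exacts [one_le_two, hk]
        _ ≤ 1 := hK
      by_contra! h1
      have : 2 * 1 ≤ 2 * (2 ^ k * β) := by gcongr
      exact absurd (this.trans h2) (by norm_num)
    exact reverse_weak_type_maximal_indicator hF hFc hρ
      (le_mul_of_one_le_left' (one_le_pow₀ one_le_two)) hk1
  choose! S hSm hSc hSlt hSvol using hlevel
  have hpt := sum_indicator_two_pow_mul_le g β S fun k hk y hy =>
    (hSlt k hk y hy).trans_le (hg y ((le_mul_of_one_le_left' (one_le_pow₀ one_le_two)).trans_lt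
      (hSlt k hk y hy)))
  calc (K : ℝ≥0∞) * volume F = ∑ k ∈ Finset.range K, volume F := by simp
    _ ≤ ∑ k ∈ Finset.range K, 4 ^ d * (2 ^ k * β * volume (S k)) :=
      Finset.sum_le_sum fun k hk => (hSvol k (Finset.mem_range.1 hk)).trans_eq (by ring)
    _ = 4 ^ d * ∫⁻ y in closedBall c (3 * ρ),
          ∑ k ∈ Finset.range K, (S k).indicator (fun _ => 2 ^ k * β) y := by
      rw [← Finset.mul_sum, lintegral_finsetSum _ fun k hk =>
        measurable_const.indicator (hSm k (Finset.mem_range.1 hk))]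
      congr 1
      refine Finset.sum_congr rfl fun k hk => ?_
      have hk := Finset.mem_range.1 hk
      rw [lintegral_indicator_const (hSm k hk), Measure.restrict_apply (hSm k hk),
        inter_eq_left.2 (hSc k hk)]
    _ ≤ 4 ^ d * ∫⁻ y in closedBall c (3 * ρ), 2 * g y := by gcongr with y; exact hpt y
    _ = 2 * 4 ^ d * ∫⁻ y in closedBall c (3 * ρ), g y := by
      rw [lintegral_const_mul' _ _ (by norm_num)]; ring

lemma natCast_mul_cubeDensity_le_maximal_maximalAbove {E : Set (Fin d → ℝ)}
    (hE : MeasurableSet E) {t : ℝ≥0∞} {x c : Fin d → ℝ} {r : ℝ} (hr : 0 < r)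
    (hx : x ∈ closedBall c r) (ht : t < cubeDensity E c r) {K : ℕ}
    (hK : 2 ^ K * cubeDensity E c r ≤ 1) :
    K * cubeDensity E c r ≤ 2 * 12 ^ d * maximal d (maximalAbove E t) x := by
  set F := E ∩ closedBall c r
  have hFE : cubeDensity F c r = cubeDensity E c r := by
    rw [cubeDensity, cubeDensity, inter_assoc, inter_self]
  have hg : ∀ y, cubeDensity F c r < maximal d (F.indicator 1) y →
      maximal d (F.indicator 1) y ≤ maximalAbove E t y := fun y hy => by
    have hFE_y : maximal d (F.indicator 1) y ≤ maximal d (E.indicator 1) y :=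
      maximal_mono (indicator_le_indicator_of_subset inter_subset_left fun _ => zero_le) y
    rw [maximalAbove, indicator_of_mem (show y ∈ {y | t < maximal d (E.indicator 1) y} from
      (ht.trans (hFE ▸ hy)).trans_le hFE_y)]
    exact hFE_y
  have hvol := natCast_mul_volume_le_setLIntegral (hE.inter measurableSet_closedBall)
    inter_subset_right hr (hFE ▸ hK) hg
  have h3r : x ∈ closedBall c (3 * r) := closedBall_subset_closedBall (by linarith) hx
  refine le_trans ?_ (mul_le_mul_right (setLIntegral_div_le_maximal _ (by positivity) h3r) _)
  rw [← mul_div_assoc, ENNReal.le_div_iff_mul_le (.inl (measure_closedBall_pos volume c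
    (by positivity)).ne') (.inl measure_closedBall_lt_top.ne),
    volume_closedBall_mul _ (by norm_num) hr.le, ENNReal.ofReal_ofNat]
  calc K * cubeDensity E c r * (3 ^ d * volume (closedBall c r))
      = 3 ^ d * (K * volume F) := by rw [← cubeDensity_mul_volume hr, ← hFE]; ring
    _ ≤ 3 ^ d * (2 * 4 ^ d * ∫⁻ y in closedBall c (3 * r), maximalAbove E t y) := by gcongr
    _ = 2 * 12 ^ d * ∫⁻ y in closedBall c (3 * r), maximalAbove E t y := by
      rw [show (12 : ℝ≥0∞) = 3 * 4 by norm_num, mul_pow]; ring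


lemma ofReal_mul_one_sub_log_le_maximal_maximalAbove {E : Set (Fin d → ℝ)}
    (hE : MeasurableSet E) {x c : Fin d → ℝ} {r : ℝ} (hr : 0 < r) (hx : x ∈ closedBall c r)
    {l : ℝ} (hl0 : 0 < l) (hl : ENNReal.ofReal l < cubeDensity E c r)
    (hhalf : cubeDensity E c r < 2⁻¹) :
    ENNReal.ofReal (l * (1 - Real.log l)) ≤
      6 * 12 ^ d * maximal d (maximalAbove E (ENNReal.ofReal l)) x := by
  set β := cubeDensity E c r
  have hb : ENNReal.ofReal β.toReal = β := ENNReal.ofReal_toReal (ne_top_of_lt hhalf)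
  set b := β.toReal
  have hlb : l < b := by rwa [← hb, ENNReal.ofReal_lt_ofReal_iff_of_nonneg hl0.le] at hl
  have hb2 : b ≤ 1 / 2 := by simpa using ENNReal.toReal_mono (by simp) hhalf.le
  obtain ⟨K, hK2, hKlog⟩ := exists_two_pow_mul_le_one_and_one_sub_log_le (hl0.trans hlb) hb2
  have hKβ : 2 ^ K * β ≤ 1 := by
    rw [← hb, ← ENNReal.ofReal_ofNat 2, ← ENNReal.ofReal_pow zero_le_two,
      ← ENNReal.ofReal_mul (by positivity)]
    exact ENNReal.ofReal_le_one.2 hK2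
  calc ENNReal.ofReal (l * (1 - Real.log l)) ≤ ENNReal.ofReal (3 * (K * b)) := by
        refine ENNReal.ofReal_le_ofReal ?_
        calc l * (1 - Real.log l) ≤ b * (1 - Real.log b) :=
              mul_one_sub_log_le_mul_one_sub_log hl0 hlb.le (by linarith)
          _ ≤ 3 * (K * b) := by nlinarith
    _ = 3 * (K * β) := by
        rw [ENNReal.ofReal_mul zero_le_three, ENNReal.ofReal_mul K.cast_nonneg, hb]; simp
    _ ≤ 3 * (2 * 12 ^ d * maximal d (maximalAbove E (ENNReal.ofReal l)) x) :=
        mul_le_mul_right (natCast_mul_cubeDensity_le_maximal_maximalAbove hE hr hx hl hKβ) _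
    _ = 6 * 12 ^ d * maximal d (maximalAbove E (ENNReal.ofReal l)) x := by ring

end

/-- There exists a dimensional constant `c > 0` such that for every Borel `E`, every
`λ ∈ (0,1)` and every `x`, `χ_{{Mχ_E > λ}}(x) ≤ (c/(λ(1-log λ))) M(χ_{{Mχ_E > λ}} Mχ_E)(x)`. -/
theorem pointwise_lemma (d : ℕ) : ∃ c : ℝ, 0 < c ∧
    ∀ E : Set (Fin d → ℝ), MeasurableSet E → ∀ l : ℝ, 0 < l → l < 1 → ∀ x : Fin d → ℝ,
      ({y | ENNReal.ofReal l < maximal d (E.indicator 1) y}.indicator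
          (fun _ => (1:ℝ≥0∞)) x) ≤
        ENNReal.ofReal (c / (l * (1 - Real.log l))) *
          maximal d (({y | ENNReal.ofReal l < maximal d (E.indicator 1) y}).indicator
            (maximal d (E.indicator 1))) x := by
  refine ⟨6 * 12 ^ d, by positivity, fun E hE l hl0 hl1 x => ?_⟩
  by_cases hx : x ∈ {y | ENNReal.ofReal l < maximal d (E.indicator 1) y}
  swap
  · rw [indicator_of_notMem hx]; exact zero_le
  rw [indicator_of_mem hx]
  obtain ⟨c, r, hr, hxc, hlβ⟩ := (lt_maximal_indicator_iff hE).1 hx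
  set β := cubeDensity E c r
  set M := maximal d (maximalAbove E (ENNReal.ofReal l)) x
  refine one_le_ofReal_div_mul (mul_pos hl0 (by linarith [Real.log_neg hl0 hl1])) ?_
  rw [show ENNReal.ofReal (6 * 12 ^ d) = 6 * 12 ^ d by norm_num]
  rcases le_or_gt 2⁻¹ β with hβ | hβ
  · calc ENNReal.ofReal (l * (1 - Real.log l)) ≤ 2 * 2⁻¹ := by
          rw [ENNReal.mul_inv_cancel two_ne_zero ENNReal.ofNat_ne_top, ENNReal.ofReal_le_one]
          simpa using mul_one_sub_log_le_mul_one_sub_log hl0 hl1.le le_rfl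
      _ ≤ 6 * 12 ^ d * M := by
          gcongr
          · exact le_mul_of_le_of_one_le (by norm_num) (one_le_pow₀ (by norm_num))
          · exact hβ.trans (cubeDensity_le_maximal_maximalAbove hE hr hxc hlβ)
  · exact ofReal_mul_one_sub_log_le_maximal_maximalAbove hE hr hxc hl0 hlβ hβ
end

section
/- Suppose M : Λᵖ_u(w) → Λ^{p,∞}_u(w) is bounded, i.e., there is a constant C₀ with sup_{t>0} tᵖ W(u({|Mf| > t})) ≤ C₀ ‖f‖ᵖ_{Λᵖ_u(w)} for all f. Then for every λ ∈ (0,1) and every Borel set E ⊆ ℝᵈ, ‖χ_{{Mχ_E > λ}} · Mχ_E‖ᵖ_{Λᵖ_u(w)} ≲ (1 + log(1/λ)) ‖χ_E‖ᵖ_{Λᵖ_u(w)}, with implicit constant depending only on C₀, p and dimension. -/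
open MeasureTheory ENNReal Set

/-!
Write `M = Mχ_E ≤ 1` and `g = χ_{M > λ} M`. A level set `{g > t}` lies in `{M > max t λ}`, and is
empty for `t ≥ 1`. The weak-type bound therefore gives `W(u{g > t}) ≲ ‖χ_E‖ᵖ / max(t, λ)ᵖ`, and
integrating against `p tᵖ⁻¹ dt` over `(0, λ]` and `(λ, 1]` yields `‖χ_E‖ᵖ (1 + p log(1/λ))`.
-/

lemma maximal_le_one (d : ℕ) {f : (Fin d → ℝ) → ℝ≥0∞} (hf : f ≤ 1) (x : Fin d → ℝ) :
    maximal d f x ≤ 1 := by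
  refine iSup_le fun c => iSup_le fun r => iSup_le fun _ => iSup_le fun _ => ?_
  refine ENNReal.div_le_of_le_mul ?_
  rw [one_mul, ← setLIntegral_one]
  exact lintegral_mono hf

lemma Wfun_mono (w : ℝ → ℝ≥0∞) {a b : ℝ≥0∞} (h : a ≤ b) : Wfun w a ≤ Wfun w b :=
  lintegral_mono_set fun _ hs => ⟨hs.1, hs.2.trans_le h⟩

lemma Wfun_zero (w : ℝ → ℝ≥0∞) : Wfun w 0 = 0 := by
  simp [Wfun]

lemma uMeas_mono (d : ℕ) (u : (Fin d → ℝ) → ℝ≥0∞) {A B : Set (Fin d → ℝ)} (h : A ⊆ B) :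
    uMeas d u A ≤ uMeas d u B :=
  lintegral_mono_set h

lemma uMeas_empty (d : ℕ) (u : (Fin d → ℝ) → ℝ≥0∞) : uMeas d u ∅ = 0 := by
  simp [uMeas]

lemma setOf_lt_indicator_setOf_lt_subset {α : Type*} (F : α → ℝ≥0∞) (a b : ℝ≥0∞) :
    {x | b < {x | a < F x}.indicator F x} ⊆ {x | max b a < F x} := by
  intro x (hx : b < _)
  by_cases ha : x ∈ {x | a < F x}
  · rw [indicator_of_mem ha] at hx
    exact max_lt hx ha
  · rw [indicator_of_notMem ha] at hx
    exact (ENNReal.not_lt_zero hx).elim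

lemma lintegral_Ioc_zero_ofReal_mul_rpow_sub_one {p l : ℝ} (hp : 0 < p) (hl : 0 ≤ l) :
    ∫⁻ t in Ioc 0 l, ENNReal.ofReal (p * t ^ (p - 1)) = ENNReal.ofReal (l ^ p) := by
  rw [← ofReal_integral_eq_lintegral_ofReal]
  · rw [← intervalIntegral.integral_of_le hl, intervalIntegral.integral_const_mul,
      integral_rpow (Or.inl (by linarith)), sub_add_cancel, Real.zero_rpow hp.ne', sub_zero,
      mul_div_cancel₀ _ hp.ne']
  · have h := intervalIntegral.intervalIntegrable_rpow' (r := p - 1) (a := 0) (b := l)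
      (by linarith)
    rw [intervalIntegrable_iff, uIoc_of_le hl] at h
    exact h.const_mul p
  · filter_upwards [ae_restrict_mem measurableSet_Ioc] with t ht
    exact mul_nonneg hp.le (Real.rpow_nonneg ht.1.le _)

lemma lintegral_Ioc_ofReal_inv {a b : ℝ} (ha : 0 < a) (hab : a ≤ b) :
    ∫⁻ t in Ioc a b, ENNReal.ofReal t⁻¹ = ENNReal.ofReal (Real.log (b / a)) := by
  rw [← ofReal_integral_eq_lintegral_ofReal]
  · rw [← intervalIntegral.integral_of_le hab, integral_inv]
    rw [uIcc_of_le hab]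
    exact fun h => absurd h.1 (not_le.mpr ha)
  · refine (ContinuousOn.integrableOn_Icc ?_).mono_set Ioc_subset_Icc_self
    exact continuousOn_id.inv₀ fun x hx => (ha.trans_le hx.1).ne'
  · filter_upwards [ae_restrict_mem measurableSet_Ioc] with t ht
    exact inv_nonneg.2 (ha.trans ht.1).le

lemma setLIntegral_Ioc_zero_ofReal_mul_rpow_sub_one_mul_le {p l : ℝ} (hp : 0 < p) (hl : 0 < l)
    {φ : ℝ → ℝ≥0∞} {X : ℝ≥0∞} (h : ∀ t ∈ Ioc 0 l, φ t ≤ X / ENNReal.ofReal (l ^ p)) :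
    ∫⁻ t in Ioc 0 l, ENNReal.ofReal (p * t ^ (p - 1)) * φ t ≤ X := by
  have h_meas : Measurable fun t : ℝ => ENNReal.ofReal (p * t ^ (p - 1)) := by fun_prop
  calc ∫⁻ t in Ioc 0 l, ENNReal.ofReal (p * t ^ (p - 1)) * φ t
      ≤ ∫⁻ t in Ioc 0 l, ENNReal.ofReal (p * t ^ (p - 1)) * (X / ENNReal.ofReal (l ^ p)) :=
        setLIntegral_mono' measurableSet_Ioc fun t ht => mul_le_mul_right (h t ht) _
    _ = ENNReal.ofReal (l ^ p) * (X / ENNReal.ofReal (l ^ p)) := by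
        rw [lintegral_mul_const _ h_meas, lintegral_Ioc_zero_ofReal_mul_rpow_sub_one hp hl.le]
    _ = X := ENNReal.mul_div_cancel (ofReal_pos.2 (Real.rpow_pos_of_pos hl p)).ne' ofReal_ne_top

lemma ofReal_mul_rpow_sub_one_mul_div_rpow {p t : ℝ} (hp : 0 ≤ p) (ht : 0 < t) (X : ℝ≥0∞) :
    ENNReal.ofReal (p * t ^ (p - 1)) * (X / ENNReal.ofReal (t ^ p)) =
      X * (ENNReal.ofReal p * ENNReal.ofReal t⁻¹) := by
  have h_ne_zero : ENNReal.ofReal (t ^ p) ≠ 0 := (ofReal_pos.2 (Real.rpow_pos_of_pos ht p)).ne'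
  rw [Real.rpow_sub_one ht.ne', div_eq_mul_inv, ENNReal.ofReal_mul hp,
    ENNReal.ofReal_mul (Real.rpow_nonneg ht.le p)]
  calc ENNReal.ofReal p * (ENNReal.ofReal (t ^ p) * ENNReal.ofReal t⁻¹) *
        (X / ENNReal.ofReal (t ^ p))
      = ENNReal.ofReal p * ENNReal.ofReal t⁻¹ *
          (ENNReal.ofReal (t ^ p) * (X / ENNReal.ofReal (t ^ p))) := by ring
    _ = X * (ENNReal.ofReal p * ENNReal.ofReal t⁻¹) := by
        rw [ENNReal.mul_div_cancel h_ne_zero ofReal_ne_top, mul_comm]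

lemma setLIntegral_Ioc_ofReal_mul_rpow_sub_one_mul_le {p a b : ℝ} (hp : 0 ≤ p) (ha : 0 < a)
    (hab : a ≤ b) {φ : ℝ → ℝ≥0∞} {X : ℝ≥0∞}
    (h : ∀ t ∈ Ioc a b, φ t ≤ X / ENNReal.ofReal (t ^ p)) :
    ∫⁻ t in Ioc a b, ENNReal.ofReal (p * t ^ (p - 1)) * φ t ≤
      X * ENNReal.ofReal (p * Real.log (b / a)) := by
  calc ∫⁻ t in Ioc a b, ENNReal.ofReal (p * t ^ (p - 1)) * φ t
      ≤ ∫⁻ t in Ioc a b, X * ENNReal.ofReal p * ENNReal.ofReal t⁻¹ := by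
        refine setLIntegral_mono' measurableSet_Ioc fun t ht => ?_
        rw [mul_assoc, ← ofReal_mul_rpow_sub_one_mul_div_rpow hp (ha.trans ht.1)]
        exact mul_le_mul_right (h t ht) _
    _ = X * ENNReal.ofReal (p * Real.log (b / a)) := by
        rw [lintegral_const_mul _ measurable_inv.ennreal_ofReal, lintegral_Ioc_ofReal_inv ha hab,
          mul_assoc, ENNReal.ofReal_mul hp]

lemma lintegral_Ioi_zero_ofReal_mul_rpow_sub_one_mul_le {p l : ℝ} (hp : 0 < p) (hl : 0 < l)
    (hl1 : l ≤ 1) {φ : ℝ → ℝ≥0∞} {X : ℝ≥0∞} (h_tail : ∀ t, 1 < t → φ t = 0)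
    (h_le : ∀ t, 0 < t → φ t ≤ X / ENNReal.ofReal (max t l ^ p)) :
    ∫⁻ t in Ioi 0, ENNReal.ofReal (p * t ^ (p - 1)) * φ t ≤
      X * (1 + ENNReal.ofReal (p * Real.log (1 / l))) := by
  rw [← Ioc_union_Ioi_eq_Ioi zero_le_one, lintegral_union measurableSet_Ioi Ioc_disjoint_Ioi_same,
    ← Ioc_union_Ioc_eq_Ioc hl.le hl1, lintegral_union measurableSet_Ioc
      (Ioc_disjoint_Ioc_of_le le_rfl)]
  have h_head := setLIntegral_Ioc_zero_ofReal_mul_rpow_sub_one_mul_le hp hl fun t ht => by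
    simpa only [max_eq_right ht.2] using h_le t ht.1
  have h_middle := setLIntegral_Ioc_ofReal_mul_rpow_sub_one_mul_le hp.le hl hl1 fun t ht => by
    simpa only [max_eq_left ht.1.le] using h_le t (hl.trans ht.1)
  have h_tail' : ∫⁻ t in Ioi 1, ENNReal.ofReal (p * t ^ (p - 1)) * φ t = 0 := by
    rw [setLIntegral_congr_fun measurableSet_Ioi fun t ht => by rw [h_tail t ht, mul_zero],
      lintegral_zero]
  rw [h_tail', add_zero, mul_add, mul_one]
  exact add_le_add h_head h_middle

theorem log_norm_bound_general (d : ℕ) (p : ℝ) (hp : 0 < p)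
    (u : (Fin d → ℝ) → ℝ≥0∞) (w : ℝ → ℝ≥0∞)
    (C₀ : ℝ) (hC₀ : 0 < C₀)
    (hweak : ∀ f : (Fin d → ℝ) → ℝ≥0∞, Measurable f → ∀ t : ℝ, 0 < t →
      (ENNReal.ofReal t) ^ p *
        Wfun w (uMeas d u {x | ENNReal.ofReal t < maximal d f x}) ≤
          ENNReal.ofReal C₀ * lorentzP d p u w f) :
    ∃ C : ℝ, 0 < C ∧ ∀ E : Set (Fin d → ℝ), MeasurableSet E → ∀ l : ℝ, 0 < l → l < 1 →
      lorentzP d p u w (({x | ENNReal.ofReal l < maximal d (E.indicator 1) x}).indicator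
          (maximal d (E.indicator 1))) ≤
        ENNReal.ofReal (C * (1 + Real.log (1 / l))) *
          lorentzP d p u w (E.indicator 1) := by
  refine ⟨C₀ * max 1 p, by positivity, fun E hE l hl hl1 => ?_⟩
  set M := maximal d (E.indicator 1)
  set N := lorentzP d p u w (E.indicator 1)
  set g := {x | ENNReal.ofReal l < M x}.indicator M
  have h_M_le_one : ∀ x, M x ≤ 1 := maximal_le_one d (indicator_le_self' fun _ _ => zero_le_one)
  have h_level : ∀ s, 0 < s →
      Wfun w (uMeas d u {x | ENNReal.ofReal s < M x}) ≤
        ENNReal.ofReal C₀ * N / ENNReal.ofReal (s ^ p) := by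
    intro s hs
    rw [ENNReal.le_div_iff_mul_le (Or.inl (ofReal_pos.2 (Real.rpow_pos_of_pos hs p)).ne')
      (Or.inl ofReal_ne_top), mul_comm, ← ENNReal.ofReal_rpow_of_pos hs]
    exact hweak _ (measurable_one.indicator hE) s hs
  have h_sub : ∀ t : ℝ, {x | ENNReal.ofReal t < g x} ⊆ {x | ENNReal.ofReal (max t l) < M x} :=
    fun t => by simpa only [ENNReal.ofReal_max] using setOf_lt_indicator_setOf_lt_subset M _ _
  have h_tail : ∀ t : ℝ, 1 < t → {x | ENNReal.ofReal t < g x} = ∅ := fun t ht =>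
    eq_empty_of_subset_empty fun x hx => not_lt.2
      ((h_M_le_one x).trans (one_le_ofReal.2 (le_max_of_le_left ht.le))) (h_sub t hx)
  have hL : 0 ≤ Real.log (1 / l) := Real.log_nonneg ((one_le_div hl).2 hl1.le)
  calc lorentzP d p u w g
      ≤ ENNReal.ofReal C₀ * N * (1 + ENNReal.ofReal (p * Real.log (1 / l))) := by
        refine lintegral_Ioi_zero_ofReal_mul_rpow_sub_one_mul_le hp hl hl1.le
          (fun t ht => by rw [h_tail t ht, uMeas_empty, Wfun_zero])
          fun t ht => (Wfun_mono w (uMeas_mono d u (h_sub t))).trans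
            (h_level _ (lt_max_of_lt_left ht))
    _ = ENNReal.ofReal (C₀ * (1 + p * Real.log (1 / l))) * N := by
        rw [ENNReal.ofReal_mul hC₀.le, ENNReal.ofReal_add zero_le_one (by positivity),
          ENNReal.ofReal_one]
        ring
    _ ≤ ENNReal.ofReal (C₀ * max 1 p * (1 + Real.log (1 / l))) * N := by
        rw [mul_assoc C₀]
        gcongr
        nlinarith [le_max_left 1 p, le_max_right 1 p]

/-- If `M : Λ^p_u(w) → Λ^{p,∞}_u(w)` is bounded, then for every `λ ∈ (0,1)` and Borel `E`,
`‖χ_{{Mχ_E > λ}} Mχ_E‖^p ≲ (1 + log(1/λ)) ‖χ_E‖^p`. -/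
theorem log_norm_bound (d : ℕ) (p : ℝ) (hp : 0 < p)
    (u : (Fin d → ℝ) → ℝ≥0∞) (w : ℝ → ℝ≥0∞) (hu : Measurable u) (hw : Measurable w)
    (C₀ : ℝ) (hC₀ : 0 < C₀)
    (hweak : ∀ f : (Fin d → ℝ) → ℝ≥0∞, Measurable f → ∀ t : ℝ, 0 < t →
      (ENNReal.ofReal t) ^ p *
        Wfun w (uMeas d u {x | ENNReal.ofReal t < maximal d f x}) ≤
          ENNReal.ofReal C₀ * lorentzP d p u w f) :
    ∃ C : ℝ, 0 < C ∧ ∀ E : Set (Fin d → ℝ), MeasurableSet E → ∀ l : ℝ, 0 < l → l < 1 →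
      lorentzP d p u w (({x | ENNReal.ofReal l < maximal d (E.indicator 1) x}).indicator
          (maximal d (E.indicator 1))) ≤
        ENNReal.ofReal (C * (1 + Real.log (1 / l))) *
          lorentzP d p u w (E.indicator 1) :=
  log_norm_bound_general d p hp u w C₀ hC₀ hweak
end

section
/- Assume M is bounded from Λᵖ_u(w) to Λ^{p,∞}_u(w) for some p > 1 (with constant C₀), and assume the conclusions of the pointwise lemma (χ_{{Mχ_E>λ}} ≲ (λ(1-logλ))^{-1} M(χ_{{Mχ_E>λ}}Mχ_E)) and the logarithmic norm bound (‖χ_{{Mχ_E>λ}}Mχ_E‖ᵖ ≲ (1+log(1/λ))‖χ_E‖ᵖ). Then for every Borel set E and λ ∈ (0,1): W(u({Mχ_E > λ})) ≲ λ^{-p}(1 - log λ)^{-(p-1)} ‖χ_E‖ᵖ_{Λᵖ_u(w)}. -/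
open MeasureTheory ENNReal Set

/-! On `{Mχ_E > λ}` the pointwise lemma gives `M g ≥ λ(1 - log λ)/c` for
`g = χ_{Mχ_E > λ} Mχ_E`, so this set lies in the level set of `M g` at height
`t = λ(1 - log λ)/(2c)`. The weak-type bound for `g` at height `t` and the logarithmic norm
bound for `g` then give the estimate: the factor `1 - log λ` of the norm bound cancels one
power of `(1 - log λ)^{-p}` coming from `t^{-p}`. -/

open Filter Topology

section Cube

variable {d : ℕ}

lemma volume_cube (c : Fin d → ℝ) (r : ℝ) : volume (cube d c r) = ENNReal.ofReal (2 * r) ^ d := by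
  have hpi : cube d c r = univ.pi fun i => Icc (c i - r) (c i + r) := by
    ext y
    simp only [cube, mem_ofPred_eq, Set.mem_pi, mem_univ, true_implies, mem_Icc, abs_le]
    exact forall_congr' fun i => by constructor <;> rintro ⟨h₁, h₂⟩ <;> constructor <;> linarith
  simp only [hpi, volume_pi_pi, Real.volume_Icc, add_sub_sub_cancel, ← two_mul,
    Finset.prod_const, Finset.card_univ, Fintype.card_fin]

lemma volume_cube_ne_top (c : Fin d → ℝ) (r : ℝ) : volume (cube d c r) ≠ ∞ := by
  rw [volume_cube]
  exact ENNReal.pow_ne_top ENNReal.ofReal_ne_top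

lemma mem_cube_add_of_dist_le {c x y : Fin d → ℝ} {r δ : ℝ} (hx : x ∈ cube d c r)
    (hy : dist y x ≤ δ) : y ∈ cube d c (r + δ) := fun i =>
  calc |y i - c i| ≤ |y i - x i| + |x i - c i| := abs_sub_le _ _ _
    _ ≤ δ + r := add_le_add ((dist_le_pi_dist y x i).trans hy) (hx i)
    _ = r + δ := add_comm δ r

lemma average_le_maximal (f : (Fin d → ℝ) → ℝ≥0∞) {c x : Fin d → ℝ} {r : ℝ} (hr : 0 < r)
    (hx : x ∈ cube d c r) : (∫⁻ y in cube d c r, f y) / volume (cube d c r) ≤ maximal d f x :=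
  le_iSup_of_le c <| le_iSup_of_le r <| le_iSup_of_le hr <| le_iSup_of_le hx le_rfl

-- Enlarging the cube by a small `δ` keeps the average above `t`, and the enlarged cube
-- contains the whole `δ`-ball around `x`.
lemma lowerSemicontinuous_maximal (f : (Fin d → ℝ) → ℝ≥0∞) :
    LowerSemicontinuous (maximal d f) := by
  intro x t ht
  simp only [maximal, lt_iSup_iff] at ht
  obtain ⟨c, r, hr, hx, hlt⟩ := ht
  have hvol : Tendsto (fun δ : ℝ => volume (cube d c (r + δ))) (𝓝 0)
      (𝓝 (volume (cube d c r))) := by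
    simp only [volume_cube]
    exact ((ENNReal.continuous_pow d).comp
      (ENNReal.continuous_ofReal.comp (by fun_prop))).tendsto' 0 _ (by simp)
  have hlim := ENNReal.Tendsto.const_div (a := ∫⁻ z in cube d c r, f z) hvol
    (Or.inl (volume_cube_ne_top c r))
  obtain ⟨δ, hδt, hδ⟩ := ((hlim.eventually (lt_mem_nhds hlt)).filter_mono nhdsWithin_le_nhds
    |>.and (self_mem_nhdsWithin (s := Ioi 0))).exists
  filter_upwards [Metric.ball_mem_nhds x hδ] with y hy
  calc t < (∫⁻ z in cube d c r, f z) / volume (cube d c (r + δ)) := hδt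
    _ ≤ (∫⁻ z in cube d c (r + δ), f z) / volume (cube d c (r + δ)) := by
      gcongr
      exact fun z hz => mem_cube_add_of_dist_le hz ((dist_self z).le.trans hδ.le)
    _ ≤ maximal d f y :=
      average_le_maximal f (add_pos hr hδ) (mem_cube_add_of_dist_le hx (Metric.mem_ball.1 hy).le)

lemma measurable_maximal (f : (Fin d → ℝ) → ℝ≥0∞) : Measurable (maximal d f) :=
  (lowerSemicontinuous_maximal f).measurable

end Cube

lemma Wfun_mono_s10 (w : ℝ → ℝ≥0∞) : Monotone (Wfun w) := fun _ _ h =>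
  lintegral_mono_set fun _ hs => ⟨hs.1, hs.2.trans_le h⟩

lemma ofReal_div_two_mul_lt_of_one_le_mul {a c : ℝ} {b : ℝ≥0∞} (ha : 0 < a) (hc : 0 < c)
    (h : 1 ≤ ENNReal.ofReal (c / a) * b) : ENNReal.ofReal (a / (2 * c)) < b :=
  calc ENNReal.ofReal (a / (2 * c)) < ENNReal.ofReal (c / a)⁻¹ := by
        rw [inv_div, ENNReal.ofReal_lt_ofReal_iff (div_pos ha hc)]
        exact div_lt_div_of_pos_left ha hc (by linarith)
    _ = (ENNReal.ofReal (c / a))⁻¹ := ENNReal.ofReal_inv_of_pos (div_pos hc ha)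
    _ ≤ b := (ENNReal.inv_le_iff_le_mul (fun _ => by simpa using div_pos hc ha) (by simp)).2 h

lemma mul_div_div_rpow {l L k : ℝ} (hl : 0 < l) (hL : 0 < L) (hk : 0 < k) (C p : ℝ) :
    C * L / (l * L / k) ^ p = C * k ^ p / (l ^ p * L ^ (p - 1)) := by
  rw [Real.div_rpow (by positivity) hk.le, Real.mul_rpow hl.le hL.le, Real.rpow_sub_one hL.ne']
  have := Real.rpow_pos_of_pos hl p
  have := Real.rpow_pos_of_pos hL p
  have := Real.rpow_pos_of_pos hk p
  field_simp

theorem improved_weak_bound_general (d : ℕ) (p : ℝ)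
    (u : (Fin d → ℝ) → ℝ≥0∞) (w : ℝ → ℝ≥0∞)
    (C₀ : ℝ) (hC₀ : 0 < C₀)
    (hweak : ∀ f : (Fin d → ℝ) → ℝ≥0∞, Measurable f → ∀ t : ℝ, 0 < t →
      (ENNReal.ofReal t) ^ p *
        Wfun w (uMeas d u {x | ENNReal.ofReal t < maximal d f x}) ≤
          ENNReal.ofReal C₀ * lorentzP d p u w f)
    (c : ℝ) (hc : 0 < c)
    (hpt : ∀ E : Set (Fin d → ℝ), MeasurableSet E → ∀ l : ℝ, 0 < l → l < 1 →
      ∀ x : Fin d → ℝ,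
        ({y | ENNReal.ofReal l < maximal d (E.indicator 1) y}.indicator
            (fun _ => (1:ℝ≥0∞)) x) ≤
          ENNReal.ofReal (c / (l * (1 - Real.log l))) *
            maximal d (({y | ENNReal.ofReal l < maximal d (E.indicator 1) y}).indicator
              (maximal d (E.indicator 1))) x)
    (C₁ : ℝ) (hC₁ : 0 < C₁)
    (hlog : ∀ E : Set (Fin d → ℝ), MeasurableSet E → ∀ l : ℝ, 0 < l → l < 1 →
      lorentzP d p u w (({x | ENNReal.ofReal l < maximal d (E.indicator 1) x}).indicator
          (maximal d (E.indicator 1))) ≤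
        ENNReal.ofReal (C₁ * (1 + Real.log (1 / l))) *
          lorentzP d p u w (E.indicator 1)) :
    ∃ C : ℝ, 0 < C ∧ ∀ E : Set (Fin d → ℝ), MeasurableSet E → ∀ l : ℝ, 0 < l → l < 1 →
      Wfun w (uMeas d u {x | ENNReal.ofReal l < maximal d (E.indicator 1) x}) ≤
        ENNReal.ofReal (C / (l ^ p * (1 - Real.log l) ^ (p - 1))) *
          lorentzP d p u w (E.indicator 1) := by
  refine ⟨C₀ * C₁ * (2 * c) ^ p, by positivity, fun E hE l hl hl1 => ?_⟩
  set S := {x | ENNReal.ofReal l < maximal d (E.indicator 1) x}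
  set g := S.indicator (maximal d (E.indicator 1))
  have hL : 0 < 1 - Real.log l := by linarith [Real.log_neg hl hl1]
  set t := l * (1 - Real.log l) / (2 * c)
  have ht : 0 < t := by positivity
  have hg : Measurable g := (measurable_maximal _).indicator
    (measurableSet_lt measurable_const (measurable_maximal _))
  have hS : S ⊆ {x | ENNReal.ofReal t < maximal d g x} := fun x hx =>
    ofReal_div_two_mul_lt_of_one_le_mul (mul_pos hl hL) hc <| by
      simpa [S, hx] using hpt E hE l hl hl1 x
  have htp : ENNReal.ofReal t ^ p = ENNReal.ofReal (t ^ p) := ENNReal.ofReal_rpow_of_pos ht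
  calc Wfun w (uMeas d u S) ≤ Wfun w (uMeas d u {x | ENNReal.ofReal t < maximal d g x}) :=
        Wfun_mono_s10 w (lintegral_mono_set hS)
    _ ≤ ENNReal.ofReal C₀ * lorentzP d p u w g / ENNReal.ofReal t ^ p := by
        rw [ENNReal.le_div_iff_mul_le (by simp [htp, Real.rpow_pos_of_pos ht p])
          (by simp [htp]), mul_comm]
        exact hweak g hg t ht
    _ ≤ ENNReal.ofReal C₀ * (ENNReal.ofReal (C₁ * (1 + Real.log (1 / l))) *
          lorentzP d p u w (E.indicator 1)) / ENNReal.ofReal t ^ p := by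
        gcongr
        exact hlog E hE l hl hl1
    _ = _ := by
        rw [← mul_assoc, ← ENNReal.ofReal_mul hC₀.le, htp, ENNReal.mul_div_right_comm,
          ← ENNReal.ofReal_div_of_pos (by positivity), one_div, Real.log_inv, ← sub_eq_add_neg,
          ← mul_assoc, mul_div_div_rpow hl hL (by positivity)]

/-- Assuming the weak-type boundedness, the pointwise lemma, and the logarithmic norm bound,
one gets `W(u({Mχ_E > λ})) ≲ λ^{-p} (1 - log λ)^{-(p-1)} ‖χ_E‖^p`. -/
theorem improved_weak_bound (d : ℕ) (p : ℝ) (hp : 1 < p)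
    (u : (Fin d → ℝ) → ℝ≥0∞) (w : ℝ → ℝ≥0∞)
    (CΔ : ℝ) (hΔ : ∀ t : ℝ≥0∞, Wfun w (2 * t) ≤ ENNReal.ofReal CΔ * Wfun w t)
    (C₀ : ℝ) (hC₀ : 0 < C₀)
    (hweak : ∀ f : (Fin d → ℝ) → ℝ≥0∞, Measurable f → ∀ t : ℝ, 0 < t →
      (ENNReal.ofReal t) ^ p *
        Wfun w (uMeas d u {x | ENNReal.ofReal t < maximal d f x}) ≤
          ENNReal.ofReal C₀ * lorentzP d p u w f)
    (c : ℝ) (hc : 0 < c)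
    (hpt : ∀ E : Set (Fin d → ℝ), MeasurableSet E → ∀ l : ℝ, 0 < l → l < 1 →
      ∀ x : Fin d → ℝ,
        ({y | ENNReal.ofReal l < maximal d (E.indicator 1) y}.indicator
            (fun _ => (1:ℝ≥0∞)) x) ≤
          ENNReal.ofReal (c / (l * (1 - Real.log l))) *
            maximal d (({y | ENNReal.ofReal l < maximal d (E.indicator 1) y}).indicator
              (maximal d (E.indicator 1))) x)
    (C₁ : ℝ) (hC₁ : 0 < C₁)
    (hlog : ∀ E : Set (Fin d → ℝ), MeasurableSet E → ∀ l : ℝ, 0 < l → l < 1 →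
      lorentzP d p u w (({x | ENNReal.ofReal l < maximal d (E.indicator 1) x}).indicator
          (maximal d (E.indicator 1))) ≤
        ENNReal.ofReal (C₁ * (1 + Real.log (1 / l))) *
          lorentzP d p u w (E.indicator 1)) :
    ∃ C : ℝ, 0 < C ∧ ∀ E : Set (Fin d → ℝ), MeasurableSet E → ∀ l : ℝ, 0 < l → l < 1 →
      Wfun w (uMeas d u {x | ENNReal.ofReal l < maximal d (E.indicator 1) x}) ≤
        ENNReal.ofReal (C / (l ^ p * (1 - Real.log l) ^ (p - 1))) *
          lorentzP d p u w (E.indicator 1) :=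
  improved_weak_bound_general d p u w C₀ hC₀ hweak c hc hpt C₁ hC₁ hlog
end

section
/- Let w be a weight on (0,∞) with W(t) = ∫₀ᵗ w(s) ds. For p > 1, if w satisfies the B_p condition rᵖ ∫_r^∞ w(t)/tᵖ dt ≤ C ∫₀^r w(s) ds for all r > 0, then w satisfies the B_{p,∞} condition W(t)/tᵖ ≤ C' W(r)/rᵖ for all 0 < r < t. -/
open MeasureTheory ENNReal Set

/-!
Split `W(t) = W(r) + ∫_r^t w`. On `(r, t]` we have `w(s) ≤ tᵖ · w(s)/sᵖ`, so the second piece is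
at most `tᵖ ∫_r^∞ w(s)/sᵖ ds`, which the `B_p` condition bounds by `C tᵖ W(r)/rᵖ`. Dividing by `tᵖ`
and using `rᵖ ≤ tᵖ` gives `W(t)/tᵖ ≤ (1 + C) W(r)/rᵖ`.
-/

lemma setLIntegral_Ioc_le_rpow_mul_setLIntegral_Ioi_div_rpow {p r t : ℝ} (hp : 0 ≤ p)
    (hr : 0 < r) (w : ℝ → ℝ≥0∞) :
    ∫⁻ s in Ioc r t, w s ≤ ENNReal.ofReal (t ^ p) * ∫⁻ s in Ioi r, w s / ENNReal.ofReal (s ^ p) := by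
  calc ∫⁻ s in Ioc r t, w s
      ≤ ∫⁻ s in Ioc r t, ENNReal.ofReal (t ^ p) * (w s / ENNReal.ofReal (s ^ p)) := by
        refine setLIntegral_mono' measurableSet_Ioc fun s hs => ?_
        have hs0 : 0 < s := hr.trans hs.1
        calc w s = w s / ENNReal.ofReal (s ^ p) * ENNReal.ofReal (s ^ p) :=
              (ENNReal.div_mul_cancel (by simp [Real.rpow_pos_of_pos hs0]) ofReal_ne_top).symm
          _ ≤ w s / ENNReal.ofReal (s ^ p) * ENNReal.ofReal (t ^ p) := by
              gcongr
              exact hs.2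
          _ = _ := mul_comm _ _
    _ = ENNReal.ofReal (t ^ p) * ∫⁻ s in Ioc r t, w s / ENNReal.ofReal (s ^ p) :=
        lintegral_const_mul' _ _ ofReal_ne_top
    _ ≤ ENNReal.ofReal (t ^ p) * ∫⁻ s in Ioi r, w s / ENNReal.ofReal (s ^ p) := by
        gcongr
        exact Ioc_subset_Ioi_self

lemma setLIntegral_Ioc_zero_div_rpow_le {p r t : ℝ} (hp : 0 ≤ p) (hr : 0 < r) (hrt : r ≤ t)
    (w : ℝ → ℝ≥0∞) :
    (∫⁻ s in Ioc 0 t, w s) / ENNReal.ofReal (t ^ p) ≤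
      (∫⁻ s in Ioc 0 r, w s) / ENNReal.ofReal (r ^ p) +
        ∫⁻ s in Ioi r, w s / ENNReal.ofReal (s ^ p) := by
  have htp : ENNReal.ofReal (t ^ p) ≠ 0 := by
    simp [Real.rpow_pos_of_pos (hr.trans_le hrt)]
  have hsplit : ∫⁻ s in Ioc 0 t, w s = (∫⁻ s in Ioc 0 r, w s) + ∫⁻ s in Ioc r t, w s := by
    rw [← lintegral_union measurableSet_Ioc (Ioc_disjoint_Ioc_of_le le_rfl),
      Ioc_union_Ioc_eq_Ioc hr.le hrt]
  calc (∫⁻ s in Ioc 0 t, w s) / ENNReal.ofReal (t ^ p)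
      ≤ ((∫⁻ s in Ioc 0 r, w s) +
          ENNReal.ofReal (t ^ p) * ∫⁻ s in Ioi r, w s / ENNReal.ofReal (s ^ p)) /
            ENNReal.ofReal (t ^ p) := by
        rw [hsplit]
        gcongr
        exact setLIntegral_Ioc_le_rpow_mul_setLIntegral_Ioi_div_rpow hp hr w
    _ = (∫⁻ s in Ioc 0 r, w s) / ENNReal.ofReal (t ^ p) +
          ∫⁻ s in Ioi r, w s / ENNReal.ofReal (s ^ p) := by
        rw [ENNReal.add_div, mul_comm (ENNReal.ofReal _), ENNReal.mul_div_cancel_right htp ofReal_ne_top]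
    _ ≤ _ := by gcongr

theorem Bp_implies_Bp_infty_general (p : ℝ) (hp : 1 < p) (w : ℝ → ℝ≥0∞)
    (C : ℝ) (hC : 0 < C)
    (hBp : ∀ r : ℝ, 0 < r →
      ENNReal.ofReal (r ^ p) * ∫⁻ t in Set.Ioi r, w t / ENNReal.ofReal (t ^ p) ≤
        ENNReal.ofReal C * ∫⁻ s in Set.Ioc (0:ℝ) r, w s) :
    ∃ C' : ℝ, 0 < C' ∧ ∀ r t : ℝ, 0 < r → r < t →
      (∫⁻ s in Set.Ioc (0:ℝ) t, w s) / ENNReal.ofReal (t ^ p) ≤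
        ENNReal.ofReal C' * (∫⁻ s in Set.Ioc (0:ℝ) r, w s) / ENNReal.ofReal (r ^ p) := by
  refine ⟨1 + C, by linarith, fun r t hr hrt => ?_⟩
  have hrp : ENNReal.ofReal (r ^ p) ≠ 0 := by simp [Real.rpow_pos_of_pos hr]
  have htail : ∫⁻ s in Ioi r, w s / ENNReal.ofReal (s ^ p) ≤
      ENNReal.ofReal C * (∫⁻ s in Ioc 0 r, w s) / ENNReal.ofReal (r ^ p) := by
    rw [ENNReal.le_div_iff_mul_le (Or.inl hrp) (Or.inl ofReal_ne_top), mul_comm]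
    exact hBp r hr
  calc (∫⁻ s in Ioc 0 t, w s) / ENNReal.ofReal (t ^ p)
      ≤ (∫⁻ s in Ioc 0 r, w s) / ENNReal.ofReal (r ^ p) +
          ENNReal.ofReal C * (∫⁻ s in Ioc 0 r, w s) / ENNReal.ofReal (r ^ p) :=
        (setLIntegral_Ioc_zero_div_rpow_le (by linarith) hr hrt.le w).trans (by gcongr)
    _ = ENNReal.ofReal (1 + C) * (∫⁻ s in Ioc 0 r, w s) / ENNReal.ofReal (r ^ p) := by
        rw [← ENNReal.add_div, ENNReal.ofReal_add zero_le_one hC.le, ofReal_one, add_mul, one_mul]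

/-- For `p > 1`, the `B_p` condition implies the `B_{p,∞}` condition. -/
theorem Bp_implies_Bp_infty (p : ℝ) (hp : 1 < p) (w : ℝ → ℝ≥0∞) (hw : Measurable w)
    (C : ℝ) (hC : 0 < C)
    (hBp : ∀ r : ℝ, 0 < r →
      ENNReal.ofReal (r ^ p) * ∫⁻ t in Set.Ioi r, w t / ENNReal.ofReal (t ^ p) ≤
        ENNReal.ofReal C * ∫⁻ s in Set.Ioc (0:ℝ) r, w s) :
    ∃ C' : ℝ, 0 < C' ∧ ∀ r t : ℝ, 0 < r → r < t →
      (∫⁻ s in Set.Ioc (0:ℝ) t, w s) / ENNReal.ofReal (t ^ p) ≤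
        ENNReal.ofReal C' * (∫⁻ s in Set.Ioc (0:ℝ) r, w s) / ENNReal.ofReal (r ^ p) :=
  Bp_implies_Bp_infty_general p hp w C hC hBp
end
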